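/- arXiv:2401.06446 — 2 statements merged into one kernel-verified Lean document; each statement's English description precedes it below -/
import Mathlib

section
/- Let V = σα²(I_g ⊗ J_h ⊗ J_m) + σβ²(J_g ⊗ I_h ⊗ J_m) + σγ²(I_g ⊗ I_h ⊗ J_m) + σe²(I_g ⊗ I_h ⊗ I_m), with σe² > 0 and σα², σβ², σγ² ≥ 0. Define λ0 = σe², λ1 = σe² + mσγ², λ2 = λ1 + hmσα², λ3 = λ1 + gmσβ², λ4 = λ1 + hmσα² + gmσβ². Then V⁻¹ = (1/λ0)(I_g ⊗ I_h ⊗ C_m) + (1/λ1)(C_g ⊗ C_h ⊗ J̄_m) + (1/λ2)(C_g ⊗ J̄_h ⊗ J̄_m) + (1/λ3)(J̄_g ⊗ C_h ⊗ J̄_m) + (1/λ4)(J̄_g ⊗ J̄_h ⊗ J̄_m). -/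
/-!
`J̄_a` and `C_a = 1 - J̄_a` are complementary orthogonal idempotents, so the eight Kronecker
products `P_{ijk} = (E_i ⊗ E_j) ⊗ E_k` with `E ∈ {J̄, C}` form a complete family of orthogonal
idempotents. Writing `J_a = a J̄_a` and `I_a = J̄_a + C_a` shows that `V = ∑ λ_{ijk} P_{ijk}`, hence
`V⁻¹ = ∑ λ_{ijk}⁻¹ P_{ijk}`; the four terms with `E_k = C_m` share the eigenvalue `σe²` and recombine
to `I_g ⊗ I_h ⊗ C_m`.
-/

open Matrix Kronecker

noncomputable def Jmat (a : ℕ) : Matrix (Fin a) (Fin a) ℝ := Matrix.of fun _ _ => 1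
noncomputable def Jbar (a : ℕ) : Matrix (Fin a) (Fin a) ℝ := ((a : ℝ)⁻¹) • Jmat a
noncomputable def Cmat (a : ℕ) : Matrix (Fin a) (Fin a) ℝ := 1 - Jbar a

/-- The dispersion matrix of the balanced two-way crossed random effects model. -/
noncomputable def Vmat (g h m : ℕ) (sa sb sc se : ℝ) :
    Matrix ((Fin g × Fin h) × Fin m) ((Fin g × Fin h) × Fin m) ℝ :=
  sa • (((1 : Matrix (Fin g) (Fin g) ℝ) ⊗ₖ Jmat h) ⊗ₖ Jmat m) +
  sb • ((Jmat g ⊗ₖ (1 : Matrix (Fin h) (Fin h) ℝ)) ⊗ₖ Jmat m) +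
  sc • (((1 : Matrix (Fin g) (Fin g) ℝ) ⊗ₖ (1 : Matrix (Fin h) (Fin h) ℝ)) ⊗ₖ Jmat m) +
  se • (1 : Matrix ((Fin g × Fin h) × Fin m) ((Fin g × Fin h) × Fin m) ℝ)

section Spectral

variable {ι κ K : Type*} [Fintype ι] [Fintype κ]

theorem CompleteOrthogonalIdempotents.sum_smul_mul_sum_smul {A : Type*} [Semiring A]
    [CommSemiring K] [Algebra K A] {e : ι → A} (he : CompleteOrthogonalIdempotents e)
    (c d : ι → K) :
    (∑ i, c i • e i) * (∑ i, d i • e i) = ∑ i, (c i * d i) • e i := by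
  classical
  simp only [Finset.sum_mul_sum, smul_mul_smul_comm, he.mul_eq, smul_ite, smul_zero,
    Finset.sum_ite_eq, Finset.mem_univ, if_true]

theorem Matrix.sum_kronecker_sum {n m : Type*} [CommSemiring K] (e : ι → Matrix n n K)
    (f : κ → Matrix m m K) :
    ∑ p : ι × κ, e p.1 ⊗ₖ f p.2 = (∑ i, e i) ⊗ₖ (∑ j, f j) := by
  ext ⟨a, b⟩ ⟨a', b'⟩
  simp [Fintype.sum_prod_type, Matrix.sum_apply, Finset.sum_mul_sum]

variable {n m : Type*} [Fintype n] [DecidableEq n] [Fintype m] [DecidableEq m]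

theorem CompleteOrthogonalIdempotents.inv_sum_smul [Field K] {e : ι → Matrix n n K}
    (he : CompleteOrthogonalIdempotents e) {c : ι → K} (hc : ∀ i, c i ≠ 0) :
    (∑ i, c i • e i)⁻¹ = ∑ i, (c i)⁻¹ • e i := by
  refine Matrix.inv_eq_right_inv ?_
  simp only [he.sum_smul_mul_sum_smul, mul_inv_cancel₀ (hc _), one_smul, he.complete]

theorem CompleteOrthogonalIdempotents.kronecker [CommSemiring K] {e : ι → Matrix n n K}
    {f : κ → Matrix m m K}
    (he : CompleteOrthogonalIdempotents e) (hf : CompleteOrthogonalIdempotents f) :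
    CompleteOrthogonalIdempotents fun p : ι × κ => e p.1 ⊗ₖ f p.2 where
  idem p := by
    rw [IsIdempotentElem, ← mul_kronecker_mul, (he.idem p.1).eq, (hf.idem p.2).eq]
  ortho p q hpq := by
    dsimp only
    rw [← mul_kronecker_mul]
    by_cases h1 : p.1 = q.1
    · rw [hf.ortho fun h2 => hpq (Prod.ext h1 h2), kronecker_zero]
    · rw [he.ortho h1, zero_kronecker]
  complete := by
    rw [sum_kronecker_sum, he.complete, hf.complete, one_kronecker_one]

end Spectral

theorem Jmat_mul_Jmat (a : ℕ) : Jmat a * Jmat a = (a : ℝ) • Jmat a := by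
  ext i j
  simp [Jmat, Matrix.mul_apply]

theorem isIdempotentElem_Jbar {a : ℕ} (ha : a ≠ 0) : IsIdempotentElem (Jbar a) := by
  have : (a : ℝ) ≠ 0 := Nat.cast_ne_zero.mpr ha
  rw [IsIdempotentElem, Jbar, smul_mul_smul_comm, Jmat_mul_Jmat, smul_smul, mul_assoc,
    inv_mul_cancel₀ this, mul_one]

theorem Jmat_eq_smul_Jbar {a : ℕ} (ha : a ≠ 0) : Jmat a = (a : ℝ) • Jbar a := by
  rw [Jbar, smul_smul, mul_inv_cancel₀ (Nat.cast_ne_zero.mpr ha), one_smul]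

theorem one_eq_Jbar_add_Cmat (a : ℕ) : (1 : Matrix (Fin a) (Fin a) ℝ) = Jbar a + Cmat a := by
  rw [Cmat, add_sub_cancel]

noncomputable def meanProj (a : ℕ) : Fin 2 → Matrix (Fin a) (Fin a) ℝ := ![Jbar a, Cmat a]

theorem completeOrthogonalIdempotents_meanProj {a : ℕ} (ha : a ≠ 0) :
    CompleteOrthogonalIdempotents (meanProj a) :=
  .of_isIdempotentElem (isIdempotentElem_Jbar ha)

noncomputable def Vproj (g h m : ℕ) (p : (Fin 2 × Fin 2) × Fin 2) :
    Matrix ((Fin g × Fin h) × Fin m) ((Fin g × Fin h) × Fin m) ℝ :=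
  (meanProj g p.1.1 ⊗ₖ meanProj h p.1.2) ⊗ₖ meanProj m p.2

/-- The eigenvalue of `Vmat` on the range of `Vproj g h m p`; index `0` stands for `Jbar`. -/
noncomputable def Veigen (g h m : ℕ) (sa sb sc se : ℝ) : (Fin 2 × Fin 2) × Fin 2 → ℝ
  | ((i, j), k) => se + if k = 0 then
      m * sc + (if j = 0 then h * m * sa else 0) + (if i = 0 then g * m * sb else 0) else 0

theorem Vmat_eq_sum (g h m : ℕ) (hg : g ≠ 0) (hh : h ≠ 0) (hm : m ≠ 0) (sa sb sc se : ℝ) :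
    Vmat g h m sa sb sc se = ∑ p, Veigen g h m sa sb sc se p • Vproj g h m p := by
  rw [Vmat, ← one_kronecker_one, ← one_kronecker_one]
  simp only [Jmat_eq_smul_Jbar hg, Jmat_eq_smul_Jbar hh, Jmat_eq_smul_Jbar hm,
    one_eq_Jbar_add_Cmat, kronecker_add, add_kronecker, kronecker_smul, smul_kronecker,
    Fintype.sum_prod_type, Fin.sum_univ_two, Vproj, Veigen, meanProj, cons_val_zero,
    cons_val_one, cons_val_fin_one, if_pos, one_ne_zero, if_false, add_zero]
  module

theorem stmt3 (g h m : ℕ) (hg : 0 < g) (hh : 0 < h) (hm : 0 < m)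
    (sa sb sc se : ℝ) (hsa : 0 ≤ sa) (hsb : 0 ≤ sb) (hsc : 0 ≤ sc) (hse : 0 < se) :
    (Vmat g h m sa sb sc se)⁻¹ =
      (se)⁻¹ • (((1 : Matrix (Fin g) (Fin g) ℝ) ⊗ₖ (1 : Matrix (Fin h) (Fin h) ℝ)) ⊗ₖ Cmat m) +
      (se + m * sc)⁻¹ • ((Cmat g ⊗ₖ Cmat h) ⊗ₖ Jbar m) +
      (se + m * sc + h * m * sa)⁻¹ • ((Cmat g ⊗ₖ Jbar h) ⊗ₖ Jbar m) +
      (se + m * sc + g * m * sb)⁻¹ • ((Jbar g ⊗ₖ Cmat h) ⊗ₖ Jbar m) +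
      (se + m * sc + h * m * sa + g * m * sb)⁻¹ • ((Jbar g ⊗ₖ Jbar h) ⊗ₖ Jbar m) := by
  have hproj : CompleteOrthogonalIdempotents (Vproj g h m) :=
    ((completeOrthogonalIdempotents_meanProj hg.ne').kronecker
      (completeOrthogonalIdempotents_meanProj hh.ne')).kronecker
      (completeOrthogonalIdempotents_meanProj hm.ne')
  have hne : ∀ p, Veigen g h m sa sb sc se p ≠ 0 := by
    rintro ⟨⟨i, j⟩, k⟩
    dsimp only [Veigen]
    positivity
  rw [Vmat_eq_sum g h m hg.ne' hh.ne' hm.ne', hproj.inv_sum_smul hne,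
    one_eq_Jbar_add_Cmat g, one_eq_Jbar_add_Cmat h]
  simp only [Fintype.sum_prod_type, Fin.sum_univ_two, Vproj, Veigen, meanProj, cons_val_zero,
    cons_val_one, cons_val_fin_one, if_pos, one_ne_zero, if_false, add_zero, kronecker_add,
    add_kronecker]
  module
end

section
/- The determinant of V equals λ0^{gh(m−1)} · λ1^{(g−1)(h−1)} · λ2^{g−1} · λ3^{h−1} · λ4, where λ0 = σe², λ1 = σe² + mσγ², λ2 = λ1 + hmσα², λ3 = λ1 + gmσβ², λ4 = λ1 + hmσα² + gmσβ². -/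
/-
Let `P_a` be the `a × a` matrix whose first column is the all-ones vector and whose other columns
are `e_j - e_0`. Then `J_a P_a = P_a diag(a, 0, …, 0)` and `det P_a = a ≠ 0`, so
`P = P_g ⊗ P_h ⊗ P_m` simultaneously diagonalizes the four Kronecker terms of `V`. Hence `det V` is
the product of the eigenvalues, which take the five values `λ₀, …, λ₄` according to which of the
three indices of the eigenvector are the distinguished one.
-/

open Matrix Kronecker

namespace Matrix

variable {R : Type*} [CommRing R] {l n : Type*} [Fintype l] [DecidableEq l] [Fintype n]
  [DecidableEq n]

/-- The columns of `P` are eigenvectors of `A` with eigenvalues `d`; `P` need not be invertible. -/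
def Diagonalizes (P A : Matrix n n R) (d : n → R) : Prop := A * P = P * diagonal d

theorem diagonalizes_one (P : Matrix n n R) : Diagonalizes P 1 fun _ => 1 := by
  rw [Diagonalizes, diagonal_one, one_mul, mul_one]

namespace Diagonalizes

variable {P A B : Matrix n n R} {a b : n → R}

theorem add (hA : Diagonalizes P A a) (hB : Diagonalizes P B b) :
    Diagonalizes P (A + B) (a + b) := by
  rw [Diagonalizes, add_mul, hA, hB, ← mul_add, diagonal_add]
  rfl

theorem smul (hA : Diagonalizes P A a) (c : R) : Diagonalizes P (c • A) (c • a) := by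
  rw [Diagonalizes, smul_mul, hA, ← Matrix.mul_smul, ← diagonal_smul]

theorem kronecker {Q B : Matrix l l R} {b : l → R} (hA : Diagonalizes P A a)
    (hB : Diagonalizes Q B b) :
    Diagonalizes (P ⊗ₖ Q) (A ⊗ₖ B) fun p => a p.1 * b p.2 := by
  rw [Diagonalizes, ← mul_kronecker_mul, hA, hB, mul_kronecker_mul, diagonal_kronecker_diagonal]

theorem det_eq (hA : Diagonalizes P A a) (hP : IsUnit P.det) : A.det = ∏ i, a i := by
  apply hP.mul_left_cancel
  rw [← det_diagonal, mul_comm, ← det_mul, hA, det_mul]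

end Diagonalizes

/-- Column `i₀` is the all-ones vector, column `j ≠ i₀` is `e_j - e_{i₀}`. -/
def onesEigenbasis (i₀ : n) : Matrix n n R :=
  of fun i j => (if i = j then 1 else 0) + (if j = i₀ then 1 else 0) - (if i = i₀ then 1 else 0)

theorem diagonalizes_allOnes (i₀ : n) :
    Diagonalizes (onesEigenbasis i₀) (of fun _ _ => (1 : R))
      fun k => if k = i₀ then (Fintype.card n : R) else 0 := by
  ext i j
  rw [mul_diagonal, mul_apply]
  by_cases hj : j = i₀ <;>
    simp [onesEigenbasis, Finset.sum_sub_distrib, hj]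

theorem det_onesEigenbasis (i₀ : n) : (onesEigenbasis i₀ : Matrix n n R).det = Fintype.card n := by
  -- a rank-two perturbation of the identity, so the determinant reduces to a `2 × 2` one
  let A : Matrix n (Fin 2) R := of fun i t => if t = 0 then 1 else -(if i = i₀ then 1 else 0)
  let B : Matrix (Fin 2) n R := of fun t j => if t = 0 then (if j = i₀ then 1 else 0) else 1
  have hP : onesEigenbasis i₀ = 1 + A * B := by
    ext i j
    simp only [onesEigenbasis, A, B, of_apply, add_apply, one_apply, mul_apply, mul_ite, mul_one,
      mul_zero, Fin.sum_univ_two, Fin.isValue, ↓reduceIte, one_ne_zero]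
    ring
  rw [hP, det_one_add_mul_comm, det_fin_two]
  simp [A, B, mul_apply]

end Matrix

section

variable {M : Type*} [CommMonoid M] {l n o : Type*} [Fintype l] [DecidableEq l] [Fintype n]
  [DecidableEq n] [Fintype o] [DecidableEq o]

theorem Fintype.prod_ite_eq_mul_pow (i₀ : n) (a b : M) :
    ∏ k, (if k = i₀ then a else b) = a * b ^ (Fintype.card n - 1) := by
  rw [Fintype.prod_eq_mul_prod_compl i₀, if_pos rfl,
    Finset.prod_congr rfl fun k hk => if_neg (Finset.notMem_singleton.mp (Finset.mem_compl.mp hk)),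
    Finset.prod_const, Finset.card_compl, Finset.card_singleton]

theorem Fintype.prod_prod_prod_ite (l₀ : l) (n₀ : n) (o₀ : o) (a b c d e : M) :
    ∏ i, ∏ j, ∏ k, (if k = o₀ then
        (if i = l₀ then (if j = n₀ then a else b) else (if j = n₀ then c else d)) else e) =
      e ^ (card l * card n * (card o - 1)) * d ^ ((card l - 1) * (card n - 1)) *
        c ^ (card l - 1) * b ^ (card n - 1) * a := by
  simp only [prod_ite_eq_mul_pow, Finset.prod_mul_distrib, Finset.prod_ite_irrel,
    Finset.prod_const, Finset.card_univ, mul_pow, ← pow_mul]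
  ac_rfl

end

theorem diagonalizes_Vmat (g h m : ℕ) [NeZero g] [NeZero h] [NeZero m] (sa sb sc se : ℝ) :
    Diagonalizes ((onesEigenbasis 0 ⊗ₖ onesEigenbasis 0) ⊗ₖ onesEigenbasis 0)
      (Vmat g h m sa sb sc se) fun p =>
        if p.2 = 0 then
          (if p.1.1 = 0 then
            (if p.1.2 = 0 then se + m * sc + h * m * sa + g * m * sb else se + m * sc + g * m * sb)
          else (if p.1.2 = 0 then se + m * sc + h * m * sa else se + m * sc))
        else se := by
  have hJ (a : ℕ) [NeZero a] := diagonalizes_allOnes (R := ℝ) (0 : Fin a)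
  have h1 (a : ℕ) [NeZero a] := diagonalizes_one (onesEigenbasis (R := ℝ) (0 : Fin a))
  convert (((((h1 g).kronecker (hJ h)).kronecker (hJ m)).smul sa).add
    ((((hJ g).kronecker (h1 h)).kronecker (hJ m)).smul sb)).add
    ((((h1 g).kronecker (h1 h)).kronecker (hJ m)).smul sc) |>.add
    ((diagonalizes_one _).smul se) using 1
  · rfl
  funext ⟨⟨i, j⟩, k⟩
  by_cases hk : k = 0 <;> by_cases hi : i = 0 <;> by_cases hj : j = 0 <;> simp [hi, hj, hk] <;> ring

theorem stmt5_general (g h m : ℕ) (hg : 0 < g) (hh : 0 < h) (hm : 0 < m)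
    (sa sb sc se : ℝ) :
    (Vmat g h m sa sb sc se).det =
      se ^ (g * h * (m - 1)) *
      (se + m * sc) ^ ((g - 1) * (h - 1)) *
      (se + m * sc + h * m * sa) ^ (g - 1) *
      (se + m * sc + g * m * sb) ^ (h - 1) *
      (se + m * sc + h * m * sa + g * m * sb) := by
  have := NeZero.of_pos hg
  have := NeZero.of_pos hh
  have := NeZero.of_pos hm
  have hP : IsUnit ((onesEigenbasis (0 : Fin g) ⊗ₖ onesEigenbasis (0 : Fin h)) ⊗ₖ
      onesEigenbasis (0 : Fin m) : Matrix _ _ ℝ).det := by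
    simp [det_kronecker, det_onesEigenbasis, hg.ne', hh.ne', hm.ne']
  rw [(diagonalizes_Vmat g h m sa sb sc se).det_eq hP, Fintype.prod_prod_type,
    Fintype.prod_prod_type, Fintype.prod_prod_prod_ite]
  simp only [Fintype.card_fin]

theorem stmt5 (g h m : ℕ) (hg : 0 < g) (hh : 0 < h) (hm : 0 < m)
    (sa sb sc se : ℝ) (hsa : 0 ≤ sa) (hsb : 0 ≤ sb) (hsc : 0 ≤ sc) (hse : 0 < se) :
    (Vmat g h m sa sb sc se).det =
      se ^ (g * h * (m - 1)) *
      (se + m * sc) ^ ((g - 1) * (h - 1)) *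
      (se + m * sc + h * m * sa) ^ (g - 1) *
      (se + m * sc + g * m * sb) ^ (h - 1) *
      (se + m * sc + h * m * sa + g * m * sb) :=
  stmt5_general g h m hg hh hm sa sb sc se
end
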